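/- The series ∑_{n≥0} (C(2n,n)/4^n)^3 equals Γ(1/4)^4 / (4π³). -/

import Mathlib

/-!
Write `c k = ((1/4)_k / k!)²` for the coefficients of `₂F₁(1/4, 1/4; 1; x)`. Clausen's formula
`₂F₁(1/4, 1/4; 1; x)² = ₃F₂(1/2, 1/2, 1/2; 1, 1; x)` says that the Cauchy square of `c` is
`(C(2n,n)/4ⁿ)³`; here it is proved by telescoping with the certificate `-8 i² (i + 3j) cᵢ cⱼ`.
Hence the series equals `(∑ c k)²`, and Gauss's summation `₂F₁(a, a; 1; 1) = Γ(1-2a)/Γ(1-a)²`,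
obtained by integrating the binomial series of `(1-x)^(-a)` against the Beta density
`x^(a-1) (1-x)^(-a)`, evaluates `∑ c k` as `Γ(1/2)/Γ(3/4)²`. The reflection formula
`Γ(1/4) Γ(3/4) = π √2` finishes the computation.
-/

open MeasureTheory Set

namespace Ring

lemma multichoose_succ_mul {K : Type*} [Field K] [CharZero K] (a : K) (k : ℕ) :
    multichoose a (k + 1) * (k + 1) = multichoose a k * (a + k) := by
  have hfac (n : ℕ) : (n.factorial : K) ≠ 0 := Nat.cast_ne_zero.2 n.factorial_ne_zero
  have h (n : ℕ) : multichoose a n = (ascPochhammer K n).eval a / n.factorial := by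
    rw [eq_div_iff (hfac n), mul_comm, ← nsmul_eq_mul,
      factorial_nsmul_multichoose_eq_ascPochhammer, Polynomial.ascPochhammer_smeval_eq_eval]
  rw [h, h, ascPochhammer_succ_eval, Nat.factorial_succ]
  have hk : (k + 1 : K) ≠ 0 := Nat.cast_add_one_ne_zero k
  push_cast
  field_simp

lemma multichoose_nonneg {K : Type*} [Field K] [LinearOrder K] [IsStrictOrderedRing K] {a : K}
    (ha : 0 ≤ a) (k : ℕ) : 0 ≤ multichoose a k := by
  induction k with
  | zero => simp
  | succ k ih =>
    have := multichoose_succ_mul a k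
    nlinarith [mul_nonneg ih (by positivity : (0 : K) ≤ a + k)]

end Ring

lemma MeasureTheory.hasSum_integral_of_nonneg {ι α : Type*} [Countable ι] [MeasurableSpace α]
    {μ : Measure α} {F : ι → α → ℝ} {f : α → ℝ} (hF_meas : ∀ n, AEStronglyMeasurable (F n) μ)
    (hF_nonneg : ∀ n, 0 ≤ᵐ[μ] F n) (hf : Integrable f μ)
    (h_lim : ∀ᵐ a ∂μ, HasSum (fun n => F n a) (f a)) :
    HasSum (fun n => ∫ a, F n a ∂μ) (∫ a, f a ∂μ) :=
  hasSum_integral_of_dominated_convergence F hF_meas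
    (fun n => (hF_nonneg n).mono fun _ ha => (Real.norm_of_nonneg ha).le)
    (h_lim.mono fun _ h => h.summable)
    (hf.congr (h_lim.mono fun _ h => h.tsum_eq.symm)) h_lim

lemma Complex.ofReal_rpow_mul_one_sub_rpow {x : ℝ} (hx : x ∈ Icc 0 1) (s t : ℝ) :
    ((x ^ (s - 1) * (1 - x) ^ (t - 1) : ℝ) : ℂ) =
      (x : ℂ) ^ ((s : ℂ) - 1) * (1 - x) ^ ((t : ℂ) - 1) := by
  rw [Complex.ofReal_mul, Complex.ofReal_cpow hx.1, Complex.ofReal_cpow (sub_nonneg.2 hx.2)]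
  push_cast
  rfl

namespace Real

lemma Gamma_add_nat_eq {a : ℝ} (ha : 0 < a) (k : ℕ) :
    Gamma (a + k) = k.factorial * Ring.multichoose a k * Gamma a := by
  induction k with
  | zero => simp
  | succ k ih =>
    rw [Nat.cast_succ, ← add_assoc, Gamma_add_one (by positivity), ih, Nat.factorial_succ,
      Nat.cast_mul, Nat.cast_succ]
    linear_combination (k.factorial * Gamma a) * (Ring.multichoose_succ_mul a k).symm

lemma hasSum_multichoose_mul_pow (a : ℝ) {x : ℝ} (hx : |x| < 1) :
    HasSum (fun k => Ring.multichoose a k * x ^ k) ((1 - x) ^ (-a)) := by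
  have h := (one_div_one_sub_rpow_hasFPowerSeriesOnBall_zero a).hasSum
    (y := x) (by simpa [enorm_eq_nnnorm, ← NNReal.coe_lt_one] using hx)
  simp only [FormalMultilinearSeries.ofScalars_apply_eq, smul_eq_mul, zero_add,
    ← Ring.multichoose_eq] at h
  rwa [rpow_neg (by linarith [le_abs_self x]), ← one_div]

lemma integrableOn_rpow_mul_one_sub_rpow {s t : ℝ} (hs : 0 < s) (ht : 0 < t) :
    IntegrableOn (fun x : ℝ => x ^ (s - 1) * (1 - x) ^ (t - 1)) (Ioo 0 1) := by
  have h := (Complex.betaIntegral_convergent (u := s) (v := t) (by simpa) (by simpa)).1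
  refine IntegrableOn.congr_fun (h.mono_set Ioo_subset_Ioc_self).re (fun x hx => ?_)
    measurableSet_Ioo
  simp [← Complex.ofReal_rpow_mul_one_sub_rpow (Ioo_subset_Icc_self hx)]

lemma integral_rpow_mul_one_sub_rpow {s t : ℝ} (hs : 0 < s) (ht : 0 < t) :
    ∫ x in Ioo (0 : ℝ) 1, x ^ (s - 1) * (1 - x) ^ (t - 1) = Gamma s * Gamma t / Gamma (s + t) := by
  have hbeta : ((∫ x in Ioo 0 1, x ^ (s - 1) * (1 - x) ^ (t - 1) : ℝ) : ℂ)
      = Complex.betaIntegral s t := by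
    rw [Complex.betaIntegral, intervalIntegral.integral_of_le zero_le_one,
      ← integral_Ioc_eq_integral_Ioo, ← integral_complex_ofReal]
    exact setIntegral_congr_fun measurableSet_Ioc fun x hx =>
      Complex.ofReal_rpow_mul_one_sub_rpow (Ioc_subset_Icc_self hx) s t
  have key := Complex.Gamma_mul_Gamma_eq_betaIntegral (s := s) (t := t) (by simpa) (by simpa)
  rw [← hbeta, Complex.Gamma_ofReal, Complex.Gamma_ofReal, ← Complex.ofReal_add,
    Complex.Gamma_ofReal] at key
  rw [eq_div_iff (Gamma_pos_of_pos (by linarith)).ne', mul_comm]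
  exact_mod_cast key.symm

lemma integral_multichoose_mul_rpow_mul_one_sub_rpow {a : ℝ} (ha₀ : 0 < a) (ha₁ : a < 1)
    (k : ℕ) :
    ∫ x in Ioo (0 : ℝ) 1, Ring.multichoose a k * (x ^ ((k + a) - 1) * (1 - x) ^ ((1 - a) - 1)) =
      Ring.multichoose a k ^ 2 * (Gamma a * Gamma (1 - a)) := by
  rw [integral_const_mul, integral_rpow_mul_one_sub_rpow (by positivity) (by linarith),
    add_comm (k : ℝ), Gamma_add_nat_eq ha₀, show a + k + (1 - a) = k + 1 by ring,
    Gamma_nat_eq_factorial]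
  field_simp

lemma hasSum_multichoose_mul_rpow_mul_one_sub_rpow (a : ℝ) {x : ℝ} (hx : x ∈ Ioo (0 : ℝ) 1) :
    HasSum (fun k : ℕ => Ring.multichoose a k * (x ^ ((k + a) - 1) * (1 - x) ^ ((1 - a) - 1)))
      (x ^ (a - 1) * (1 - x) ^ ((1 - 2 * a) - 1)) := by
  have hterm (k : ℕ) : Ring.multichoose a k * (x ^ ((k + a) - 1) * (1 - x) ^ ((1 - a) - 1)) =
      Ring.multichoose a k * x ^ k * (x ^ (a - 1) * (1 - x) ^ (-a)) := by
    rw [show (k : ℝ) + a - 1 = k + (a - 1) by ring, rpow_add hx.1, rpow_natCast,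
      show 1 - a - 1 = -a by ring]
    ring
  have hsum : x ^ (a - 1) * (1 - x) ^ ((1 - 2 * a) - 1) =
      (1 - x) ^ (-a) * (x ^ (a - 1) * (1 - x) ^ (-a)) := by
    rw [show 1 - 2 * a - 1 = -a + -a by ring, rpow_add (by linarith [hx.2])]
    ring
  rw [funext hterm, hsum]
  exact (hasSum_multichoose_mul_pow a (abs_lt.2 ⟨by linarith [hx.1], hx.2⟩)).mul_right _

theorem hasSum_multichoose_sq {a : ℝ} (ha₀ : 0 < a) (ha : 2 * a < 1) :
    HasSum (fun k => Ring.multichoose a k ^ 2) (Gamma (1 - 2 * a) / Gamma (1 - a) ^ 2) := by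
  have hF_nonneg (k : ℕ) : ∀ x ∈ Ioo (0 : ℝ) 1,
      0 ≤ Ring.multichoose a k * (x ^ ((k + a) - 1) * (1 - x) ^ ((1 - a) - 1)) := fun x hx =>
    mul_nonneg (Ring.multichoose_nonneg ha₀.le k)
      (mul_nonneg (rpow_nonneg hx.1.le _) (rpow_nonneg (by linarith [hx.2]) _))
  have h := hasSum_integral_of_nonneg (μ := volume.restrict (Ioo 0 1))
    (fun k => (((integrableOn_rpow_mul_one_sub_rpow (by positivity) (by linarith)).const_mul
      (Ring.multichoose a k))).1)
    (fun k => (ae_restrict_iff' measurableSet_Ioo).2 (ae_of_all _ (hF_nonneg k)))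
    (integrableOn_rpow_mul_one_sub_rpow ha₀ (by linarith))
    ((ae_restrict_iff' measurableSet_Ioo).2
      (ae_of_all _ fun x hx => hasSum_multichoose_mul_rpow_mul_one_sub_rpow a hx))
  simp only [integral_multichoose_mul_rpow_mul_one_sub_rpow ha₀ (by linarith),
    integral_rpow_mul_one_sub_rpow ha₀ (by linarith : 0 < 1 - 2 * a),
    show a + (1 - 2 * a) = 1 - a by ring] at h
  have hΓa := (Gamma_pos_of_pos ha₀).ne'
  have hΓ := (Gamma_pos_of_pos (by linarith : 0 < 1 - a)).ne'
  have hval : Gamma a * Gamma (1 - 2 * a) / Gamma (1 - a) =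
      Gamma (1 - 2 * a) / Gamma (1 - a) ^ 2 * (Gamma a * Gamma (1 - a)) := by
    field_simp
  rw [hval] at h
  exact (hasSum_mul_right_iff (mul_ne_zero hΓa hΓ)).1 h

lemma Gamma_one_quarter_mul_Gamma_three_quarters :
    Gamma (1 / 4) * Gamma (3 / 4) = π * √2 := by
  rw [show (3 / 4 : ℝ) = 1 - 1 / 4 by norm_num, Gamma_mul_Gamma_one_sub,
    show π * (1 / 4) = π / 4 by ring, sin_pi_div_four]
  field_simp
  rw [sq_sqrt zero_le_two]

end Real

open Finset

noncomputable def clausenCoeff (k : ℕ) : ℝ := Ring.multichoose (1 / 4 : ℝ) k ^ 2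

lemma clausenCoeff_succ (k : ℕ) :
    (4 * k + 4) ^ 2 * clausenCoeff (k + 1) = (4 * k + 1) ^ 2 * clausenCoeff k := by
  have h := Ring.multichoose_succ_mul (1 / 4 : ℝ) k
  simp only [clausenCoeff]
  linear_combination 16 * (Ring.multichoose (1 / 4 : ℝ) (k + 1) * (k + 1)
    + Ring.multichoose (1 / 4 : ℝ) k * (1 / 4 + k)) * h

noncomputable def clausenCert (i j : ℕ) : ℝ :=
  -8 * i ^ 2 * (i + 3 * j) * clausenCoeff i * clausenCoeff j

lemma clausenCoeff_zero : clausenCoeff 0 = 1 := by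
  simp [clausenCoeff]

lemma clausenCert_sub (k j : ℕ) :
    clausenCert (k + 1) j - clausenCert k (j + 1) =
      8 * (k + j + 1) ^ 3 * (clausenCoeff k * clausenCoeff (j + 1))
        - (2 * (k + j) + 1) ^ 3 * (clausenCoeff k * clausenCoeff j) := by
  have hk := clausenCoeff_succ k
  have hj := clausenCoeff_succ j
  simp only [clausenCert]
  push_cast
  linear_combination (-(k + 3 * j + 1) / 2 * clausenCoeff j) * hk
    - ((3 * k + j + 1) / 2 * clausenCoeff k) * hj

lemma sum_antidiagonal_clausenCoeff_mul_succ (n : ℕ) :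
    8 * (n + 1) ^ 3 * ∑ p ∈ antidiagonal (n + 1), clausenCoeff p.1 * clausenCoeff p.2 =
      (2 * n + 1) ^ 3 * ∑ p ∈ antidiagonal n, clausenCoeff p.1 * clausenCoeff p.2 := by
  have htel : ∑ p ∈ antidiagonal n, (clausenCert (p.1 + 1) p.2 - clausenCert p.1 (p.2 + 1)) =
      clausenCert (n + 1) 0 - clausenCert 0 (n + 1) := by
    have h₁ := Nat.sum_antidiagonal_succ (n := n) (f := fun p => clausenCert p.1 p.2)
    have h₂ := Nat.sum_antidiagonal_succ' (n := n) (f := fun p => clausenCert p.1 p.2)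
    rw [sum_sub_distrib]
    linarith
  have hterm : ∀ p ∈ antidiagonal n, clausenCert (p.1 + 1) p.2 - clausenCert p.1 (p.2 + 1) =
      8 * (n + 1) ^ 3 * (clausenCoeff p.1 * clausenCoeff (p.2 + 1))
        - (2 * n + 1) ^ 3 * (clausenCoeff p.1 * clausenCoeff p.2) := by
    intro p hp
    have hn : (p.1 : ℝ) + p.2 = n := by exact_mod_cast mem_antidiagonal.1 hp
    rw [clausenCert_sub, hn]
  rw [sum_congr rfl hterm, sum_sub_distrib, ← mul_sum, ← mul_sum] at htel
  rw [Nat.sum_antidiagonal_succ']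
  simp only [clausenCert, clausenCoeff_zero] at htel ⊢
  push_cast at htel
  linear_combination htel

lemma centralBinom_div_four_pow_succ (n : ℕ) :
    2 * (n + 1) * ((n + 1).centralBinom / 4 ^ (n + 1) : ℝ) =
      (2 * n + 1) * (n.centralBinom / 4 ^ n : ℝ) := by
  have h : ((n + 1 : ℕ) * (n + 1).centralBinom : ℝ) = 2 * (2 * n + 1) * n.centralBinom := by
    exact_mod_cast Nat.succ_mul_centralBinom_succ n
  rw [pow_succ]
  push_cast at h
  field_simp
  linear_combination 2 * h

theorem sum_antidiagonal_clausenCoeff_mul (n : ℕ) :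
    ∑ p ∈ antidiagonal n, clausenCoeff p.1 * clausenCoeff p.2 =
      (n.centralBinom / 4 ^ n : ℝ) ^ 3 := by
  induction n with
  | zero => simp [clausenCoeff_zero]
  | succ n ih =>
    have hS := sum_antidiagonal_clausenCoeff_mul_succ n
    have hc := congrArg (· ^ 3) (centralBinom_div_four_pow_succ n)
    rw [ih] at hS
    refine mul_left_cancel₀ (by positivity : (8 * (n + 1) ^ 3 : ℝ) ≠ 0) ?_
    linear_combination hS - hc

theorem stmt_8 :
    ∑' n : ℕ, ((Nat.centralBinom n : ℝ) / 4 ^ n) ^ 3 =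
      Real.Gamma (1 / 4) ^ 4 / (4 * Real.pi ^ 3) := by
  have hsum : HasSum clausenCoeff (Real.Gamma (1 / 2) / Real.Gamma (3 / 4) ^ 2) := by
    have h := Real.hasSum_multichoose_sq (a := 1 / 4) (by norm_num) (by norm_num)
    norm_num at h
    exact h
  have hnorm : Summable fun k => ‖clausenCoeff k‖ := summable_norm_iff.2 hsum.summable
  have hΓ : Real.Gamma (3 / 4) = Real.pi * √2 / Real.Gamma (1 / 4) :=
    eq_div_of_mul_eq (Real.Gamma_pos_of_pos (by norm_num)).ne'
      (by rw [mul_comm]; exact Real.Gamma_one_quarter_mul_Gamma_three_quarters)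
  calc ∑' n : ℕ, ((Nat.centralBinom n : ℝ) / 4 ^ n) ^ 3
      = ∑' n, ∑ p ∈ antidiagonal n, clausenCoeff p.1 * clausenCoeff p.2 := by
        simp only [sum_antidiagonal_clausenCoeff_mul]
    _ = (∑' k, clausenCoeff k) ^ 2 := by
        rw [sq, tsum_mul_tsum_eq_tsum_sum_antidiagonal_of_summable_norm hnorm hnorm]
    _ = Real.Gamma (1 / 4) ^ 4 / (4 * Real.pi ^ 3) := by
        rw [hsum.tsum_eq, hΓ, Real.Gamma_one_half_eq]
        field_simp
        rw [show √2 ^ 4 = (√2 ^ 2) ^ 2 by ring, Real.sq_sqrt zero_le_two,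
          Real.sq_sqrt Real.pi_pos.le]
        ring
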